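/- Let k ≥ 1 be an integer and c > 1 a non-integer, and suppose hypothesis (PSWG) holds with constant 0 < P*(c,k) ≤ 1/(ck). Let ω be a real number. Then: (i) there is a constant C such that uniformly for α ∈ [0,1) and all x ≥ 2, | ∑_{n≤x} n^{ω−1/(ck)} 1_{P_(c)^k}(n) (log n) e(nα) − (1/c) ∑_{n≤x} n^{ω−1/k} 1_{P^k}(n) (log n) e(nα) | ≤ C·x^{max{ω − P*(c,k), 0}}·log x; and (ii) for every C₀ ≥ 1 there is a constant C' (depending on C₀) such that uniformly for α ∈ [0,1) and all x ≥ 2, | ∑_{x/C₀ ≤ n ≤ x} n^{ω−1/(ck)} 1_{P_(c)^k}(n) (log n) e(nα) − (1/c) ∑_{x/C₀ ≤ n ≤ x} n^{ω−1/k} 1_{P^k}(n) (log n) e(nα) | ≤ C'·x^{ω − P*(c,k)}. -/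

import Mathlib

open MeasureTheory Filter Finset Set

noncomputable section

/-- `e(α) = exp(2πiα)`. -/
def eR (α : ℝ) : ℂ := Complex.exp (2 * Real.pi * Complex.I * α)

/-- The Piatetski-Shapiro set `N_(c) = {⌊n^c⌋ : n ∈ ℕ, n ≥ 1}`. -/
def NPS (c : ℝ) : Set ℕ := {m | ∃ n : ℕ, 1 ≤ n ∧ m = ⌊(n : ℝ) ^ c⌋₊}

/-- `H₀(c)` for non-integral real `c > 1`. -/
def H0c (c : ℝ) : ℝ :=
  if c < 2 then 2 else ((⌊2 * c⌋ : ℝ) + 1) * ((⌊2 * c⌋ : ℝ) + 2) / 2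

/-- `H₀(k)` for a positive integer `k`. -/
def H0k (k : ℕ) : ℕ :=
  if k ≤ 4 then 2 ^ (k - 1) else k * (k - 1) / 2 + Nat.sqrt (2 * k + 2)

/-- `k`-th powers of positive integers. -/
def Npow (k : ℕ) : Set ℕ := {m | ∃ n : ℕ, 1 ≤ n ∧ m = n ^ k}

/-- `k`-th powers of Piatetski-Shapiro numbers. -/
def NPSpow (c : ℝ) (k : ℕ) : Set ℕ := {m | ∃ n ∈ NPS c, m = n ^ k}

/-- `k`-th powers of primes. -/
def Ppow (k : ℕ) : Set ℕ := {m | ∃ p : ℕ, p.Prime ∧ m = p ^ k}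

/-- `k`-th powers of Piatetski-Shapiro primes. -/
def PPSpow (c : ℝ) (k : ℕ) : Set ℕ := {m | ∃ p ∈ NPS c, p.Prime ∧ m = p ^ k}

/-- The representation function `r_{A,h}(n)`: the number of ordered `h`-tuples
from `A` summing to `n`. -/
def rep (A : Set ℕ) (h n : ℕ) : ℕ :=
  Nat.card {x : Fin h → ℕ // (∀ i, x i ∈ A) ∧ ∑ i, x i = n}

open scoped Classical in
/-- The finite set of ordered `h`-tuples of elements of `A` summing to `N`. -/
def tuples (A : Set ℕ) (h N : ℕ) : Finset (Fin h → ℕ) :=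
  (Fintype.piFinset fun _ : Fin h => Finset.range (N + 1)).filter
    (fun x => (∀ i, x i ∈ A) ∧ ∑ i, x i = N)

/-- Weighted exponential sum `∑_{1 ≤ n ≤ x, n ∈ A} w(n) e(nα)`. -/
def expSum (A : Set ℕ) (w : ℕ → ℝ) (α x : ℝ) : ℂ :=
  ∑ n ∈ Finset.Icc 1 ⌊x⌋₊, ((Set.indicator A w n : ℝ) : ℂ) * eR (n * α)

/-- Weighted exponential sum `∑_{y ≤ n ≤ x, n ∈ A} w(n) e(nα)`. -/
def expSumI (A : Set ℕ) (w : ℕ → ℝ) (α y x : ℝ) : ℂ :=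
  ∑ n ∈ Finset.Icc ⌈y⌉₊ ⌊x⌋₊, ((Set.indicator A w n : ℝ) : ℂ) * eR (n * α)

/-- Distance to the nearest integer. -/
def distInt (α : ℝ) : ℝ := |α - (round α : ℝ)|

/-- The major arc `𝔐 = {α ∈ [0,1] : ‖α‖ ≤ N^ν / N}`. -/
def MajorArc (ν : ℝ) (N : ℕ) : Set ℝ :=
  {α ∈ Set.Icc (0:ℝ) 1 | distInt α ≤ (N : ℝ) ^ ν / N}

/-- The minor arc `𝔪 = [0,1] ∖ 𝔐`. -/
def MinorArc (ν : ℝ) (N : ℕ) : Set ℝ := Set.Icc (0:ℝ) 1 \ MajorArc ν N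

/-- `T(α;x) = ∑_{n≤x} n^{ω-1/c} 1_{N_(c)}(n) e(nα)`. -/
def Tc (c ω : ℝ) (α x : ℝ) : ℂ := expSum (NPS c) (fun n => (n : ℝ) ^ (ω - 1 / c)) α x

/-- `T^♯(α;x) = ∑_{x/h≤n≤x} n^{ω-1/c} 1_{N_(c)}(n) e(nα)`. -/
def TcSharp (c ω : ℝ) (h : ℕ) (α x : ℝ) : ℂ :=
  expSumI (NPS c) (fun n => (n : ℝ) ^ (ω - 1 / c)) α (x / h) x

/-- `U(α;x) = ∑_{n≤x} n^{ω-1} e(nα)`. -/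
def Uc (ω : ℝ) (α x : ℝ) : ℂ :=
  ∑ n ∈ Finset.Icc 1 ⌊x⌋₊, (((n : ℝ) ^ (ω - 1) : ℝ) : ℂ) * eR (n * α)

/-- `U^♯(α;x) = ∑_{x/h≤n≤x} n^{ω-1} e(nα)`. -/
def UcSharp (ω : ℝ) (h : ℕ) (α x : ℝ) : ℂ :=
  ∑ n ∈ Finset.Icc ⌈x / h⌉₊ ⌊x⌋₊, (((n : ℝ) ^ (ω - 1) : ℝ) : ℂ) * eR (n * α)

/-- The complete Gauss-type sum `S(a,q) = ∑_{r=1}^q e(a r^k / q)`. -/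
def Swar (k a q : ℕ) : ℂ := ∑ r ∈ Finset.Icc 1 q, eR (((a * r ^ k : ℕ) : ℝ) / q)

/-- The singular series of Waring's problem. -/
def SingSer (k h n : ℕ) : ℝ :=
  (∑' q : ℕ, ∑ a ∈ (Finset.Icc 1 q).filter (fun a => Nat.gcd a q = 1),
      (Swar k a q / (q : ℂ)) ^ h * eR (-(((n * a : ℕ) : ℝ) / q))).re

/-- The restricted Gauss-type sum `S*(q,a) = ∑_{1≤r≤q, (r,q)=1} e(a r^k / q)`. -/
def SwarStar (k a q : ℕ) : ℂ :=
  ∑ r ∈ (Finset.Icc 1 q).filter (fun r => Nat.gcd r q = 1), eR (((a * r ^ k : ℕ) : ℝ) / q)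

/-- The singular series of the Waring–Goldbach problem. -/
def SingSerStar (k h n : ℕ) : ℝ :=
  (∑' q : ℕ, ∑ a ∈ (Finset.Icc 1 q).filter (fun a => Nat.gcd a q = 1),
      (SwarStar k a q / (Nat.totient q : ℂ)) ^ h * eR (-(((n * a : ℕ) : ℝ) / q))).re

/-- `K(k) = ∏_{(p-1) ∣ k} p^{ν(k,p)}`. -/
def Kk (k : ℕ) : ℕ :=
  ∏ p ∈ (Finset.range (k + 2)).filter (fun p => p.Prime ∧ (p - 1) ∣ k),
    p ^ (k.factorization p + if p = 2 ∧ 2 ∣ k then 2 else 1)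

/-- A measurable positive function is regularly varying if `F(λx)/F(x)` converges
to a positive limit for every `λ > 0`. -/
def RegularlyVarying (F : ℝ → ℝ) : Prop :=
  Measurable F ∧ ∀ l : ℝ, 0 < l → ∃ L : ℝ, 0 < L ∧
    Filter.Tendsto (fun x => F (l * x) / F x) Filter.atTop (nhds L)

/-- Hypothesis (PSW). -/
def PSW (c : ℝ) (k : ℕ) (P : ℝ) : Prop :=
  ∃ C : ℝ, ∀ α ∈ Set.Ico (0:ℝ) 1, ∀ x : ℝ, 2 ≤ x →
    Norm.norm (expSum (NPSpow c k) (fun _ => 1) α x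
      - (1 / c) * expSum (Npow k) (fun n => (n : ℝ) ^ ((1 / c - 1) / k)) α x)
      ≤ C * x ^ (1 / (c * k) - P)

/-- Hypothesis (PSWG). -/
def PSWG (c : ℝ) (k : ℕ) (P : ℝ) : Prop :=
  ∃ C : ℝ, ∀ α ∈ Set.Ico (0:ℝ) 1, ∀ x : ℝ, 2 ≤ x →
    Norm.norm (expSum (PPSpow c k) (fun n => Real.log n) α x
      - (1 / c) * expSum (Ppow k) (fun n => (n : ℝ) ^ ((1 / c - 1) / k) * Real.log n) α x)
      ≤ C * x ^ (1 / (c * k) - P)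

/-! Write `d_α(n) = pswgSummand c k α n` for the summand of the (PSWG) difference, so that
(PSWG) bounds the partial sums of `d_α` by `B t^q` with `q = 1/(ck) - P`, uniformly in `α`. Since
`n^(ω - 1/k) = n^s n^((1/c - 1)/k)` with `s = ω - 1/(ck)`, both sums of the theorem are
`∑ n^s d_α(n)`. Partial summation together with `(i+1)^s - i^s = O(i^(s-1))` bounds such a sum
over `[M, N]` by a multiple of `N^(s+q) + M^(s+q) + ∑_{M ≤ i < N} i^(s+q-1)`. Over `[1, x]` the
last sum is at most `x^max(s+q, 0)` times a harmonic sum, which gives the factor `log x`; over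
`[x/C₀, x]` it has at most `x` terms, each `O(x^(s+q-1))`. -/
open Real

lemma rpow_le_rpow_abs_mul_rpow {b u v τ : ℝ} (hu : 0 < u) (hv : 0 < v)
    (huv : u ≤ b * v) (hvu : v ≤ b * u) : u ^ τ ≤ b ^ |τ| * v ^ τ := by
  rw [← div_le_iff₀ (rpow_pos_of_pos hv τ), ← div_rpow hu.le hv.le]
  rcases le_or_gt 0 τ with hτ | hτ
  · rw [abs_of_nonneg hτ]
    exact rpow_le_rpow (by positivity) ((div_le_iff₀ hv).mpr huv) hτ
  · rw [abs_of_neg hτ, ← inv_div, inv_rpow (by positivity), ← rpow_neg (by positivity)]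
    exact rpow_le_rpow (by positivity) ((div_le_iff₀ hu).mpr hvu) (by linarith)

lemma abs_add_one_rpow_sub_rpow_le (s : ℝ) {i : ℝ} (hi : 1 ≤ i) :
    |(i + 1) ^ s - i ^ s| ≤ |s| * 2 ^ |s - 1| * i ^ (s - 1) := by
  have hderiv : ∀ t ∈ Set.Icc i (i + 1), HasDerivAt (fun u => u ^ s) (s * t ^ (s - 1)) t :=
    fun t ht => hasDerivAt_rpow_const (Or.inl (by linarith [ht.1]))
  obtain ⟨t, ⟨hit, hti⟩, hslope⟩ := exists_hasDerivAt_eq_slope (fun u => u ^ s)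
    (fun u => s * u ^ (s - 1)) (lt_add_one i)
    (fun t ht => (hderiv t ht).continuousAt.continuousWithinAt)
    (fun t ht => hderiv t (Set.Ioo_subset_Icc_self ht))
  rw [add_sub_cancel_left, div_one] at hslope
  rw [← hslope, abs_mul, abs_of_nonneg (rpow_nonneg (by linarith) _), mul_assoc]
  gcongr
  exact rpow_le_rpow_abs_mul_rpow (by linarith) (by linarith) (by linarith) (by linarith)

lemma rpow_le_rpow_max_zero {t x σ : ℝ} (ht : 1 ≤ t) (htx : t ≤ x) : t ^ σ ≤ x ^ max σ 0 :=
  (rpow_le_rpow_of_exponent_le ht (le_max_left σ 0)).trans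
    (rpow_le_rpow (by linarith) htx (le_max_right σ 0))

lemma sum_Ico_one_floor_rpow_sub_one_le (σ : ℝ) {x : ℝ} (hx : 1 ≤ x) :
    ∑ i ∈ Finset.Ico 1 ⌊x⌋₊, (i : ℝ) ^ (σ - 1) ≤ x ^ max σ 0 * (1 + log x) := by
  have hN : (⌊x⌋₊ : ℝ) ≤ x := Nat.floor_le (by linarith)
  have hN0 : 0 < ⌊x⌋₊ := Nat.floor_pos.mpr hx
  have hterm : ∀ i ∈ Finset.Ico 1 ⌊x⌋₊, (i : ℝ) ^ (σ - 1) ≤ x ^ max σ 0 * (i : ℝ)⁻¹ := by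
    intro i hi
    obtain ⟨h1i, hiN⟩ := Finset.mem_Ico.mp hi
    have hi : (1 : ℝ) ≤ i := by exact_mod_cast h1i
    rw [rpow_sub_one (by positivity), div_eq_mul_inv]
    gcongr
    calc (i : ℝ) ^ σ ≤ (i : ℝ) ^ max σ 0 := rpow_le_rpow_of_exponent_le hi (le_max_left σ 0)
      _ ≤ x ^ max σ 0 := rpow_le_rpow (by positivity)
          (le_trans (by exact_mod_cast hiN.le) hN) (le_max_right σ 0)
  have hharmonic : ∑ i ∈ Finset.Ico 1 ⌊x⌋₊, (i : ℝ)⁻¹ ≤ 1 + log x := by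
    calc _ ≤ ∑ i ∈ Icc 1 ⌊x⌋₊, (i : ℝ)⁻¹ :=
          sum_le_sum_of_subset_of_nonneg Finset.Ico_subset_Icc_self fun _ _ _ => by positivity
      _ = harmonic ⌊x⌋₊ := by simp [harmonic_eq_sum_Icc]
      _ ≤ 1 + log ⌊x⌋₊ := harmonic_le_one_add_log _
      _ ≤ 1 + log x := by gcongr
  calc _ ≤ ∑ i ∈ Finset.Ico 1 ⌊x⌋₊, x ^ max σ 0 * (i : ℝ)⁻¹ := sum_le_sum hterm
    _ = x ^ max σ 0 * ∑ i ∈ Finset.Ico 1 ⌊x⌋₊, (i : ℝ)⁻¹ := (mul_sum _ _ _).symm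
    _ ≤ _ := by gcongr

lemma sum_Icc_ceil_floor_rpow_le (σ : ℝ) {C₀ x : ℝ} (hC₀ : 1 ≤ C₀) (hx : 0 < x)
    (hMN : ⌈x / C₀⌉₊ ≤ ⌊x⌋₊) :
    (⌊x⌋₊ : ℝ) ^ σ + (⌈x / C₀⌉₊ : ℝ) ^ σ + ∑ i ∈ Finset.Ico ⌈x / C₀⌉₊ ⌊x⌋₊, (i : ℝ) ^ (σ - 1)
      ≤ (2 * C₀ ^ |σ| + C₀ ^ |σ - 1|) * x ^ σ := by
  have hcomp : ∀ i : ℕ, ⌈x / C₀⌉₊ ≤ i → i ≤ ⌊x⌋₊ → ∀ τ : ℝ, (i : ℝ) ^ τ ≤ C₀ ^ |τ| * x ^ τ := by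
    intro i hMi hiN τ
    have hlow : x / C₀ ≤ i := (Nat.le_ceil _).trans (by exact_mod_cast hMi)
    have hup : (i : ℝ) ≤ x := (Nat.cast_le.mpr hiN).trans (Nat.floor_le hx.le)
    have hi : 0 < (i : ℝ) := lt_of_lt_of_le (by positivity) hlow
    exact rpow_le_rpow_abs_mul_rpow hi hx (by nlinarith) ((div_le_iff₀' (by linarith)).mp hlow)
  have hcard : ((Finset.Ico ⌈x / C₀⌉₊ ⌊x⌋₊).card : ℝ) ≤ x := by
    rw [Nat.card_Ico]
    exact (Nat.cast_le.mpr (Nat.sub_le _ _)).trans (Nat.floor_le hx.le)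
  have hsum : ∑ i ∈ Finset.Ico ⌈x / C₀⌉₊ ⌊x⌋₊, (i : ℝ) ^ (σ - 1) ≤ C₀ ^ |σ - 1| * x ^ σ := by
    calc _ ≤ ∑ _i ∈ Finset.Ico ⌈x / C₀⌉₊ ⌊x⌋₊, C₀ ^ |σ - 1| * x ^ (σ - 1) :=
          sum_le_sum fun i hi => hcomp i (Finset.mem_Ico.mp hi).1 (Finset.mem_Ico.mp hi).2.le _
      _ ≤ x * (C₀ ^ |σ - 1| * x ^ (σ - 1)) := by
          rw [sum_const, nsmul_eq_mul]; gcongr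
      _ = C₀ ^ |σ - 1| * x ^ σ := by rw [rpow_sub_one hx.ne']; field_simp
  linarith [hcomp _ hMN le_rfl σ, hcomp _ le_rfl hMN σ]

lemma norm_sum_Icc_smul_le {E : Type*} [SeminormedAddCommGroup E] [NormedSpace ℝ E]
    (f : ℕ → ℝ) (a : ℕ → E) {M N : ℕ} (hMN : M ≤ N) :
    ‖∑ n ∈ Icc M N, f n • a n‖ ≤ |f N| * ‖∑ n ∈ range (N + 1), a n‖
      + |f M| * ‖∑ n ∈ range M, a n‖
      + ∑ i ∈ Finset.Ico M N, |f (i + 1) - f i| * ‖∑ n ∈ range (i + 1), a n‖ := by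
  rw [← Finset.Ico_add_one_right_eq_Icc, sum_Ico_by_parts f a (Nat.lt_add_one_of_le hMN),
    Nat.add_sub_cancel]
  refine (norm_sub_le _ _).trans (add_le_add ((norm_sub_le _ _).trans_eq ?_)
    ((norm_sum_le _ _).trans_eq ?_))
  · simp only [norm_smul, Real.norm_eq_abs]
  · simp only [norm_smul, Real.norm_eq_abs]

lemma nonneg_of_forall_norm_sum_range_le {E : Type*} [SeminormedAddCommGroup E] {a : ℕ → E}
    {B q : ℝ} (hA : ∀ t : ℕ, 1 ≤ t → ‖∑ n ∈ range t, a n‖ ≤ B * (t : ℝ) ^ q) : 0 ≤ B := by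
  simpa using (norm_nonneg _).trans (hA 1 le_rfl)

section PartialSummation

variable {E : Type*} [SeminormedAddCommGroup E] [NormedSpace ℝ E] {a : ℕ → E} {B q : ℝ}

lemma norm_sum_Icc_rpow_smul_le
    (hA : ∀ t : ℕ, 1 ≤ t → ‖∑ n ∈ range t, a n‖ ≤ B * (t : ℝ) ^ q) (s : ℝ) {M N : ℕ}
    (hM : 1 ≤ M) (hMN : M ≤ N) :
    ‖∑ n ∈ Icc M N, (n : ℝ) ^ s • a n‖ ≤ B * 2 ^ |q| * (|s| * 2 ^ |s - 1| + 1) *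
      ((N : ℝ) ^ (s + q) + (M : ℝ) ^ (s + q) + ∑ i ∈ Finset.Ico M N, (i : ℝ) ^ (s + q - 1)) := by
  have hB := nonneg_of_forall_norm_sum_range_le hA
  have h2q : 1 ≤ (2 : ℝ) ^ |q| := one_le_rpow one_le_two (abs_nonneg q)
  have hpos {i : ℕ} (hi : M ≤ i) : (0 : ℝ) < i := by exact_mod_cast hM.trans hi
  have hsucc {i : ℕ} (hi : M ≤ i) :
      ‖∑ n ∈ range (i + 1), a n‖ ≤ B * 2 ^ |q| * (i : ℝ) ^ q := by
    have hi' : (1 : ℝ) ≤ i := by exact_mod_cast hM.trans hi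
    calc _ ≤ B * ((i + 1 : ℕ) : ℝ) ^ q := hA (i + 1) (by omega)
      _ ≤ B * (2 ^ |q| * (i : ℝ) ^ q) := by
        gcongr
        push_cast
        exact rpow_le_rpow_abs_mul_rpow (by linarith) (by linarith) (by linarith) (by linarith)
      _ = _ := by ring
  have hlast : |(N : ℝ) ^ s| * ‖∑ n ∈ range (N + 1), a n‖ ≤ B * 2 ^ |q| * (N : ℝ) ^ (s + q) := by
    rw [abs_of_nonneg (by positivity), rpow_add (hpos hMN)]
    calc _ ≤ (N : ℝ) ^ s * (B * 2 ^ |q| * (N : ℝ) ^ q) := by gcongr; exact hsucc hMN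
      _ = _ := by ring
  have hfirst : |(M : ℝ) ^ s| * ‖∑ n ∈ range M, a n‖ ≤ B * 2 ^ |q| * (M : ℝ) ^ (s + q) := by
    rw [abs_of_nonneg (by positivity), rpow_add (hpos le_rfl)]
    calc _ ≤ (M : ℝ) ^ s * (B * (M : ℝ) ^ q) := by gcongr; exact hA M hM
      _ ≤ (M : ℝ) ^ s * (B * 2 ^ |q| * (M : ℝ) ^ q) := by
          gcongr; exact le_mul_of_one_le_right hB h2q
      _ = _ := by ring
  have hstep : ∀ i ∈ Finset.Ico M N,
      |((i + 1 : ℕ) : ℝ) ^ s - (i : ℝ) ^ s| * ‖∑ n ∈ range (i + 1), a n‖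
        ≤ B * 2 ^ |q| * (|s| * 2 ^ |s - 1|) * (i : ℝ) ^ (s + q - 1) := by
    intro i hi
    have hMi := (Finset.mem_Ico.mp hi).1
    rw [show s + q - 1 = s - 1 + q by ring, rpow_add (hpos hMi), Nat.cast_succ]
    calc _ ≤ (|s| * 2 ^ |s - 1| * (i : ℝ) ^ (s - 1)) * (B * 2 ^ |q| * (i : ℝ) ^ q) := by
          gcongr
          · exact abs_add_one_rpow_sub_rpow_le s (by exact_mod_cast hM.trans hMi)
          · exact hsucc hMi
      _ = _ := by ring
  refine (norm_sum_Icc_smul_le _ a hMN).trans ?_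
  grw [hlast, hfirst, sum_le_sum hstep, ← mul_sum]
  have hsum : 0 ≤ ∑ i ∈ Finset.Ico M N, (i : ℝ) ^ (s + q - 1) := sum_nonneg fun i _ => by positivity
  have hB2 : 0 ≤ B * 2 ^ |q| := by positivity
  have hK : 0 ≤ |s| * 2 ^ |s - 1| := by positivity
  have hN : 0 ≤ (N : ℝ) ^ (s + q) := by positivity
  have hM : 0 ≤ (M : ℝ) ^ (s + q) := by positivity
  nlinarith [mul_nonneg hB2 (mul_nonneg hK hN), mul_nonneg hB2 (mul_nonneg hK hM),
    mul_nonneg hB2 hsum]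

lemma norm_sum_Icc_one_floor_rpow_smul_le
    (hA : ∀ t : ℕ, 1 ≤ t → ‖∑ n ∈ range t, a n‖ ≤ B * (t : ℝ) ^ q) (s : ℝ) {x : ℝ} (hx : 2 ≤ x) :
    ‖∑ n ∈ Icc 1 ⌊x⌋₊, (n : ℝ) ^ s • a n‖ ≤ B * 2 ^ |q| * (|s| * 2 ^ |s - 1| + 1) *
      (3 / log 2 + 1) * x ^ max (s + q) 0 * log x := by
  have hN : 1 ≤ ⌊x⌋₊ := Nat.le_floor (by norm_num; linarith)
  have hL : 0 ≤ B * 2 ^ |q| * (|s| * 2 ^ |s - 1| + 1) := by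
    have := nonneg_of_forall_norm_sum_range_le hA; positivity
  have hX : 1 ≤ x ^ max (s + q) 0 := one_le_rpow (by linarith) (le_max_right _ _)
  have hlog2 : 0 < log 2 := log_pos one_lt_two
  have hlog : log 2 ≤ log x := log_le_log two_pos hx
  have hfloor : (⌊x⌋₊ : ℝ) ^ (s + q) ≤ x ^ max (s + q) 0 :=
    rpow_le_rpow_max_zero (by exact_mod_cast hN) (Nat.floor_le (by linarith))
  have hsum := sum_Ico_one_floor_rpow_sub_one_le (s + q) (by linarith : 1 ≤ x)
  have h3 : 3 ≤ 3 / log 2 * log x := by rw [div_mul_eq_mul_div, le_div_iff₀ hlog2]; linarith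
  refine (norm_sum_Icc_rpow_smul_le hA s le_rfl hN).trans ?_
  have hbracket : (⌊x⌋₊ : ℝ) ^ (s + q) + ((1 : ℕ) : ℝ) ^ (s + q)
      + ∑ i ∈ Finset.Ico 1 ⌊x⌋₊, (i : ℝ) ^ (s + q - 1)
      ≤ (3 / log 2 + 1) * x ^ max (s + q) 0 * log x := by
    rw [Nat.cast_one, one_rpow]
    nlinarith [mul_le_mul_of_nonneg_left h3 (by linarith : 0 ≤ x ^ max (s + q) 0)]
  grw [hbracket]
  exact le_of_eq (by ring)

lemma norm_sum_Icc_ceil_floor_rpow_smul_le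
    (hA : ∀ t : ℕ, 1 ≤ t → ‖∑ n ∈ range t, a n‖ ≤ B * (t : ℝ) ^ q) (s : ℝ) {C₀ x : ℝ}
    (hC₀ : 1 ≤ C₀) (hx : 0 < x) :
    ‖∑ n ∈ Icc ⌈x / C₀⌉₊ ⌊x⌋₊, (n : ℝ) ^ s • a n‖ ≤ B * 2 ^ |q| * (|s| * 2 ^ |s - 1| + 1) *
      (2 * C₀ ^ |s + q| + C₀ ^ |s + q - 1|) * x ^ (s + q) := by
  have hL : 0 ≤ B * 2 ^ |q| * (|s| * 2 ^ |s - 1| + 1) := by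
    have := nonneg_of_forall_norm_sum_range_le hA; positivity
  rcases le_or_gt ⌈x / C₀⌉₊ ⌊x⌋₊ with hMN | hNM
  · have hM : 1 ≤ ⌈x / C₀⌉₊ := Nat.one_le_iff_ne_zero.mpr (Nat.ceil_pos.mpr (by positivity)).ne'
    grw [norm_sum_Icc_rpow_smul_le hA s hM hMN, sum_Icc_ceil_floor_rpow_le (s + q) hC₀ hx hMN]
    exact (mul_assoc _ _ _).symm.le
  · rw [Finset.Icc_eq_empty_of_lt hNM, sum_empty, norm_zero]
    positivity

end PartialSummation

def pswgSummand (c : ℝ) (k : ℕ) (α : ℝ) (n : ℕ) : ℂ :=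
  ((Set.indicator (PPSpow c k) (fun n => Real.log n) n : ℝ) : ℂ) * eR (n * α)
    - 1 / c * (((Set.indicator (Ppow k)
        (fun n => (n : ℝ) ^ ((1 / c - 1) / k) * Real.log n) n : ℝ) : ℂ) * eR (n * α))

lemma pswgSummand_eq_zero_of_le_one {c : ℝ} {k : ℕ} {α : ℝ} {n : ℕ} (hn : n ≤ 1) :
    pswgSummand c k α n = 0 := by
  have hlog : Real.log n = 0 := by interval_cases n <;> simp
  have hP : (PPSpow c k).indicator (fun n : ℕ => Real.log n) n = 0 :=
    Set.indicator_apply_eq_zero.mpr fun _ => hlog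
  have hQ : (Ppow k).indicator (fun n : ℕ => (n : ℝ) ^ ((1 / c - 1) / k) * Real.log n) n = 0 :=
    Set.indicator_apply_eq_zero.mpr fun _ => by rw [hlog, mul_zero]
  rw [pswgSummand, hP, hQ]
  simp

lemma PSWG.exists_norm_sum_range_pswgSummand_le {c : ℝ} {k : ℕ} {P : ℝ} (h : PSWG c k P) :
    ∃ B > 0, ∀ α ∈ Set.Ico (0 : ℝ) 1, ∀ t : ℕ, 1 ≤ t →
      ‖∑ n ∈ range t, pswgSummand c k α n‖ ≤ B * (t : ℝ) ^ (1 / (c * k) - P) := by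
  obtain ⟨C, hC⟩ := h
  refine ⟨max C 1 * 2 ^ |1 / (c * k) - P|, by positivity, fun α hα t ht => ?_⟩
  rcases le_or_gt t 2 with ht2 | ht2
  · rw [sum_eq_zero fun n hn => pswgSummand_eq_zero_of_le_one (by grind), norm_zero]
    positivity
  obtain ⟨m, rfl⟩ : ∃ m, t = m + 1 := ⟨t - 1, by omega⟩
  have hm : (2 : ℝ) ≤ m := by exact_mod_cast (by omega : 2 ≤ m)
  have hsum : ∑ n ∈ range (m + 1), pswgSummand c k α n
      = expSum (PPSpow c k) (fun n => Real.log n) α m - (1 / c) * expSum (Ppow k)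
          (fun n => (n : ℝ) ^ ((1 / c - 1) / k) * Real.log n) α m := by
    rw [range_eq_Ico, sum_eq_sum_Ico_succ_bot (by omega : 0 < m + 1),
      pswgSummand_eq_zero_of_le_one zero_le_one, zero_add, zero_add,
      Finset.Ico_add_one_right_eq_Icc, expSum, expSum, Nat.floor_natCast, mul_sum,
      ← sum_sub_distrib]
    rfl
  rw [hsum]
  calc _ ≤ C * (m : ℝ) ^ (1 / (c * k) - P) := hC α hα m hm
    _ ≤ max C 1 * (2 ^ |1 / (c * k) - P| * ((m + 1 : ℕ) : ℝ) ^ (1 / (c * k) - P)) := by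
      gcongr
      · exact le_max_left C 1
      · push_cast
        exact rpow_le_rpow_abs_mul_rpow (by linarith) (by linarith) (by linarith) (by linarith)
    _ = _ := by ring

lemma sum_weighted_sub_eq_sum_rpow_smul_pswgSummand (c : ℝ) (k : ℕ) (ω α : ℝ) (S : Finset ℕ) :
    ∑ n ∈ S, ((Set.indicator (PPSpow c k)
        (fun n => (n : ℝ) ^ (ω - 1 / (c * k)) * Real.log n) n : ℝ) : ℂ) * eR (n * α)
      - 1 / c * ∑ n ∈ S, ((Set.indicator (Ppow k)
        (fun n => (n : ℝ) ^ (ω - 1 / k) * Real.log n) n : ℝ) : ℂ) * eR (n * α)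
      = ∑ n ∈ S, (n : ℝ) ^ (ω - 1 / (c * k)) • pswgSummand c k α n := by
  have hweight : (fun n : ℕ => (n : ℝ) ^ (ω - 1 / k) * Real.log n)
      = fun n : ℕ => (n : ℝ) ^ (ω - 1 / (c * k)) * ((n : ℝ) ^ ((1 / c - 1) / k) * Real.log n) := by
    funext n
    rcases Nat.eq_zero_or_pos n with rfl | hn
    · simp
    rw [← mul_assoc, ← rpow_add (by positivity)]
    ring_nf
  rw [hweight, mul_sum, ← sum_sub_distrib]
  refine sum_congr rfl fun n _ => ?_
  rw [Set.indicator_mul_right, Set.indicator_mul_right, Complex.real_smul, pswgSummand]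
  push_cast
  ring

theorem stmt17_general (k : ℕ) (c : ℝ) (P : ℝ) (hPSWG : PSWG c k P) (ω : ℝ) :
    (∃ C > (0:ℝ), ∀ α ∈ Set.Ico (0:ℝ) 1, ∀ x : ℝ, 2 ≤ x →
      Norm.norm
        (expSum (PPSpow c k) (fun n => (n : ℝ) ^ (ω - 1 / (c * k)) * Real.log n) α x
          - (1 / c) * expSum (Ppow k) (fun n => (n : ℝ) ^ (ω - 1 / k) * Real.log n) α x)
        ≤ C * x ^ (max (ω - P) 0) * Real.log x) ∧
    (∀ C₀ : ℝ, 1 ≤ C₀ → ∃ C' > (0:ℝ), ∀ α ∈ Set.Ico (0:ℝ) 1, ∀ x : ℝ, 2 ≤ x →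
      Norm.norm
        (expSumI (PPSpow c k)
            (fun n => (n : ℝ) ^ (ω - 1 / (c * k)) * Real.log n) α (x / C₀) x
          - (1 / c) * expSumI (Ppow k)
              (fun n => (n : ℝ) ^ (ω - 1 / k) * Real.log n) α (x / C₀) x)
        ≤ C' * x ^ (ω - P)) := by
  obtain ⟨B, hB, hA⟩ := hPSWG.exists_norm_sum_range_pswgSummand_le
  set s := ω - 1 / (c * k)
  set q := 1 / (c * k) - P
  have hsq : s + q = ω - P := by ring
  refine ⟨⟨B * 2 ^ |q| * (|s| * 2 ^ |s - 1| + 1) * (3 / log 2 + 1), by positivity,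
    fun α hα x hx => ?_⟩, fun C₀ hC₀ => ⟨B * 2 ^ |q| * (|s| * 2 ^ |s - 1| + 1) *
      (2 * C₀ ^ |s + q| + C₀ ^ |s + q - 1|), by positivity, fun α hα x hx => ?_⟩⟩
  · rw [expSum, expSum, sum_weighted_sub_eq_sum_rpow_smul_pswgSummand, ← hsq]
    exact norm_sum_Icc_one_floor_rpow_smul_le (hA α hα) s hx
  · rw [expSumI, expSumI, sum_weighted_sub_eq_sum_rpow_smul_pswgSummand, ← hsq]
    exact norm_sum_Icc_ceil_floor_rpow_smul_le (hA α hα) s hC₀ (by linarith)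

/-- Weighted transfer estimates from `P_(c)^k` to `P^k`. -/
theorem stmt17 (k : ℕ) (hk : 1 ≤ k) (c : ℝ) (hc1 : 1 < c) (hcni : ∀ m : ℤ, c ≠ (m : ℝ))
    (P : ℝ) (hP0 : 0 < P) (hP1 : P ≤ 1 / (c * k)) (hPSWG : PSWG c k P)
    (ω : ℝ) :
    (∃ C > (0:ℝ), ∀ α ∈ Set.Ico (0:ℝ) 1, ∀ x : ℝ, 2 ≤ x →
      Norm.norm
        (expSum (PPSpow c k) (fun n => (n : ℝ) ^ (ω - 1 / (c * k)) * Real.log n) α x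
          - (1 / c) * expSum (Ppow k) (fun n => (n : ℝ) ^ (ω - 1 / k) * Real.log n) α x)
        ≤ C * x ^ (max (ω - P) 0) * Real.log x) ∧
    (∀ C₀ : ℝ, 1 ≤ C₀ → ∃ C' > (0:ℝ), ∀ α ∈ Set.Ico (0:ℝ) 1, ∀ x : ℝ, 2 ≤ x →
      Norm.norm
        (expSumI (PPSpow c k)
            (fun n => (n : ℝ) ^ (ω - 1 / (c * k)) * Real.log n) α (x / C₀) x
          - (1 / c) * expSumI (Ppow k)
              (fun n => (n : ℝ) ^ (ω - 1 / k) * Real.log n) α (x / C₀) x)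
        ≤ C' * x ^ (ω - P)) :=
  stmt17_general k c P hPSWG ω
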